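/- Let k ≥ 1 and d ≥ 3, and let T_{k,d} be the regular dendrimer tree of k+1 levels. Then its terminal Wiener index satisfies TW(T_{k,d}) = d(d-1)^{k-1}·[ k·d·(d-1)^{k-1} + (1 - (d-1)^k)/(d-2) ]. -/

import Mathlib

open Finset

/-- The pendent vertices of a graph: the vertices of degree 1. -/
def pendentFinset {V : Type*} [Fintype V] (G : SimpleGraph V) [DecidableRel G.Adj] : Finset V :=
  univ.filter (fun v => G.degree v = 1)

/-- The terminal Wiener index of a graph: the sum of the distances over all unordered pairs of
pendent vertices, i.e. half of the sum over all ordered pairs of pendent vertices. -/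
noncomputable def terminalWienerIndex {V : Type*} [Fintype V] (G : SimpleGraph V)
    [DecidableRel G.Adj] : ℕ :=
  (∑ u ∈ pendentFinset G, ∑ v ∈ pendentFinset G, G.dist u v) / 2

/-- `G` is a generalized Bethe tree of `k+1` levels with root `r` and degree sequence
`d 1, …, d k`: `G` is a tree; for `1 ≤ i ≤ k`, every vertex at distance `i-1` from `r` has
exactly `d i` neighbors at distance `i` from `r`; every vertex is at distance at most `k`
from `r`; and every vertex at distance `k` from `r` is a pendent vertex. -/
def IsGeneralizedBetheTree {V : Type*} [Fintype V] (G : SimpleGraph V) [DecidableRel G.Adj]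
    (r : V) (k : ℕ) (d : ℕ → ℕ) : Prop :=
  G.IsTree ∧
  (∀ i ∈ Finset.Icc 1 k, ∀ v : V, G.dist r v = i - 1 →
      ((G.neighborFinset v).filter (fun u => G.dist r u = i)).card = d i) ∧
  (∀ v : V, G.dist r v ≤ k) ∧
  (∀ v : V, G.dist r v = k → G.degree v = 1)


/-!
Root the tree at `r` and call the vertices on the path from `r` to `u` (both included) the
ancestors of `u`. Then `d(u, v) + 2 · #(anc u ∩ anc v) = depth u + depth v + 2`, since the
common ancestors form the path from `r` to the lowest common ancestor. The pendent vertices are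
exactly the vertices of depth `k`, so summing over pairs of them and exchanging the order of
summation turns `∑ #(anc u ∩ anc v)` into `∑_w ℓ(w)^2`, where `ℓ(w)` is the number of pendent
vertices below `w`. In a generalized Bethe tree there are `n_i = d_1 ⋯ d_i` vertices at depth
`i`, each with `ℓ_i = d_{i+1} ⋯ d_k` pendent vertices below it, so
`TW + ∑_i n_i ℓ_i^2 = (k + 1) n_k^2`. For the dendrimer the remaining sum is geometric.
-/

theorem Finset.sum_sum_card_inter_eq_sum_sq {ι α : Type*} [Fintype α] [DecidableEq α]
    (s : Finset ι) (A : ι → Finset α) :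
    ∑ i ∈ s, ∑ j ∈ s, #(A i ∩ A j) = ∑ a, #{i ∈ s | a ∈ A i} ^ 2 := by
  symm
  simp_rw [sq, card_filter, sum_mul_sum, ite_zero_mul_ite_zero, one_mul, ← mem_inter]
  rw [sum_comm]
  refine sum_congr rfl fun i _ => ?_
  rw [sum_comm]
  refine sum_congr rfl fun j _ => ?_
  rw [← card_filter, filter_mem_eq_inter, univ_inter]

namespace SimpleGraph

variable {V : Type*} {G : SimpleGraph V} {r p u v w x : V}

/-- On a tree rooted at `r`, this says that `w` lies on the path from `r` to `u`. -/
def IsAncestor (G : SimpleGraph V) (r w u : V) : Prop :=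
  G.dist r w + G.dist w u = G.dist r u

def IsParent (G : SimpleGraph V) (r p v : V) : Prop :=
  G.Adj p v ∧ G.dist r p + 1 = G.dist r v

theorem isAncestor_root : G.IsAncestor r r u := by
  simp [IsAncestor]

theorem isAncestor_refl : G.IsAncestor r u u := by
  simp [IsAncestor]

theorem IsParent.isAncestor (h : G.IsParent r p v) : G.IsAncestor r p v := by
  rw [IsAncestor, dist_eq_one_iff_adj.2 h.1, h.2]

theorem Connected.isAncestor_trans (hG : G.Connected) (h₁ : G.IsAncestor r w v)
    (h₂ : G.IsAncestor r v u) : G.IsAncestor r w u := by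
  have := hG.dist_triangle (u := w) (v := v) (w := u)
  have := hG.dist_triangle (u := r) (v := w) (w := u)
  unfold IsAncestor at *
  omega

theorem Connected.isAncestor_antisymm (hG : G.Connected) (h₁ : G.IsAncestor r v u)
    (h₂ : G.IsAncestor r u v) : v = u := by
  unfold IsAncestor at h₁ h₂
  have : G.dist u v = G.dist v u := dist_comm
  exact hG.dist_eq_zero_iff.1 (by omega)

theorem Connected.exists_isParent (hG : G.Connected) (hv : v ≠ r) : ∃ p, G.IsParent r p v := by
  obtain ⟨q, hq⟩ := hG.exists_walk_length_eq_dist v r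
  cases q with
  | nil => exact absurd rfl hv
  | @cons _ p _ h q =>
    have hpr : G.dist r p ≤ q.length := dist_comm (G := G) ▸ dist_le q
    have hrv : G.dist r v ≤ G.dist r p + 1 := dist_eq_one_iff_adj.2 h.symm ▸ hG.dist_triangle
    rw [Walk.length_cons, dist_comm] at hq
    exact ⟨p, h.symm, by omega⟩

theorem IsTree.isParent_unique (hT : G.IsTree) {p₁ p₂ : V} (h₁ : G.IsParent r p₁ v)
    (h₂ : G.IsParent r p₂ v) : p₁ = p₂ := by
  obtain ⟨s₁, hs₁⟩ := hT.connected.exists_walk_length_eq_dist r p₁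
  obtain ⟨s₂, hs₂⟩ := hT.connected.exists_walk_length_eq_dist r p₂
  have hpath₁ := (s₁.concat h₁.1).isPath_of_length_eq_dist (by simp [hs₁, h₁.2])
  have hpath₂ := (s₂.concat h₂.1).isPath_of_length_eq_dist (by simp [hs₂, h₂.2])
  exact (Walk.concat_inj ((hT.existsUnique_path r v).unique hpath₁ hpath₂)).1

theorem Connected.induction_on_isParent (hG : G.Connected) {P : V → Prop} (root : P r)
    (step : ∀ p v, G.IsParent r p v → P p → P v) (v : V) : P v := by
  induction hn : G.dist r v generalizing v with
  | zero => rwa [← hG.dist_eq_zero_iff.1 hn]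
  | succ n ih =>
    obtain ⟨p, hp⟩ := hG.exists_isParent (r := r) (v := v) (by rintro rfl; simp at hn)
    exact step p v hp (ih p (by have := hp.2; omega))

/-- By induction on `dist x v`: the neighbour of `v` towards `x` is not the parent of `v`, so it
is a child of `v`. -/
theorem IsTree.isAncestor_of_isParent_of_dist_lt (hT : G.IsTree) (hp : G.IsParent r p v)
    (hx : G.dist x v < G.dist x p) : G.IsAncestor r v x := by
  induction hn : G.dist x v using Nat.strong_induction_on generalizing v p with
  | _ n ih =>
  by_cases hvx : v = x
  · subst hvx; exact isAncestor_refl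
  obtain ⟨y, hyv, hy⟩ := hT.connected.exists_isParent (r := x) hvx
  have hvy : G.IsParent r v y := by
    refine ⟨hyv.symm, ?_⟩
    rcases hT.dist_eq_dist_add_one_of_adj r hyv with h | h
    · exact h.symm
    · have := hT.isParent_unique hp ⟨hyv, h.symm⟩
      subst this
      omega
  have hyx := ih _ (by omega) hvy (by omega) rfl
  have := hvy.2
  unfold IsAncestor at *
  rw [dist_comm (u := y), dist_comm (u := v)] at *
  omega

theorem IsTree.dist_eq_dist_add_one_of_isParent (hT : G.IsTree) (hp : G.IsParent r p v)
    (hx : ¬ G.IsAncestor r v x) : G.dist x v = G.dist x p + 1 := by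
  rcases hT.dist_eq_dist_add_one_of_adj x hp.1 with h | h
  · exact absurd (hT.isAncestor_of_isParent_of_dist_lt hp (by omega)) hx
  · exact h

section Ancestors

variable [Fintype V]

open Classical in
noncomputable def ancestors (G : SimpleGraph V) (r u : V) : Finset V :=
  univ.filter (G.IsAncestor r · u)

@[simp]
theorem mem_ancestors : w ∈ G.ancestors r u ↔ G.IsAncestor r w u := by
  simp [ancestors]

theorem Connected.ancestors_root [DecidableEq V] (hG : G.Connected) : G.ancestors r r = {r} := by
  ext w
  simp only [mem_ancestors, IsAncestor, mem_singleton, dist_self]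
  refine ⟨fun h => (hG.dist_eq_zero_iff.1 (by omega)).symm, ?_⟩
  rintro rfl
  simp

theorem IsTree.ancestors_eq_insert [DecidableEq V] (hT : G.IsTree) (hp : G.IsParent r p v) :
    G.ancestors r v = insert v (G.ancestors r p) := by
  ext w
  simp only [mem_insert, mem_ancestors]
  constructor
  · intro hw
    refine or_iff_not_imp_left.2 fun hwv => ?_
    have hvw : ¬ G.IsAncestor r v w := fun h => hwv (hT.connected.isAncestor_antisymm hw h)
    have := hT.dist_eq_dist_add_one_of_isParent hp hvw
    have := hp.2
    unfold IsAncestor at *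
    omega
  · rintro (rfl | hw)
    · exact isAncestor_refl
    · exact hT.connected.isAncestor_trans hw hp.isAncestor

theorem IsTree.card_ancestors (hT : G.IsTree) (v : V) : #(G.ancestors r v) = G.dist r v + 1 := by
  classical
  induction v using hT.connected.induction_on_isParent (r := r) with
  | root => simp [hT.connected.ancestors_root]
  | step p v hp ih =>
  have hv : v ∉ G.ancestors r p := fun h => by
    have := hp.2
    simp only [mem_ancestors, IsAncestor] at h
    omega
  rw [hT.ancestors_eq_insert hp, card_insert_of_notMem hv, ih, hp.2]

theorem IsTree.dist_add_two_mul_card_inter_ancestors [DecidableEq V] (hT : G.IsTree) (u v : V) :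
    G.dist u v + 2 * #(G.ancestors r u ∩ G.ancestors r v) = G.dist r u + G.dist r v + 2 := by
  induction v using hT.connected.induction_on_isParent (r := r) with
  | root =>
    rw [hT.connected.ancestors_root, inter_singleton_of_mem (by simpa using isAncestor_root)]
    simp [dist_comm]
  | step p v hp ih =>
  by_cases hvu : G.IsAncestor r v u
  · have hsub : G.ancestors r v ⊆ G.ancestors r u := fun w hw => by
      simp only [mem_ancestors] at hw ⊢
      exact hT.connected.isAncestor_trans hw hvu
    rw [inter_eq_right.2 hsub, hT.card_ancestors, dist_comm]
    unfold IsAncestor at hvu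
    omega
  · have hv : v ∉ G.ancestors r u := by simpa using hvu
    rw [hT.ancestors_eq_insert hp, inter_insert_of_notMem hv,
      hT.dist_eq_dist_add_one_of_isParent hp hvu, ← hp.2]
    omega

open Classical in
noncomputable def descendantsAt (G : SimpleGraph V) (r w : V) (j : ℕ) : Finset V :=
  univ.filter (fun u => G.dist r u = j ∧ G.IsAncestor r w u)

@[simp]
theorem mem_descendantsAt {j : ℕ} :
    u ∈ G.descendantsAt r w j ↔ G.dist r u = j ∧ G.IsAncestor r w u := by
  simp [descendantsAt]

theorem Connected.descendantsAt_dist (hG : G.Connected) :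
    G.descendantsAt r w (G.dist r w) = {w} := by
  ext u
  simp only [mem_descendantsAt, IsAncestor, mem_singleton]
  refine ⟨fun ⟨h₁, h₂⟩ => (hG.dist_eq_zero_iff.1 (by omega)).symm, ?_⟩
  rintro rfl
  simp

theorem IsTree.card_descendantsAt_succ [DecidableRel G.Adj] (hT : G.IsTree) {j : ℕ}
    (hw : G.dist r w ≤ j) :
    #(G.descendantsAt r w (j + 1)) =
      ∑ p ∈ G.descendantsAt r w j, #{u ∈ G.neighborFinset p | G.dist r u = j + 1} := by
  classical
  have hunion : G.descendantsAt r w (j + 1) = (G.descendantsAt r w j).biUnion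
      fun p => {u ∈ G.neighborFinset p | G.dist r u = j + 1} := by
    ext u
    simp only [mem_descendantsAt, mem_biUnion, mem_filter, mem_neighborFinset]
    constructor
    · rintro ⟨hu, hwu⟩
      obtain ⟨p, hp⟩ := hT.connected.exists_isParent (r := r) (v := u) (by rintro rfl; simp at hu)
      have hwp : w ∈ insert u (G.ancestors r p) := by
        rw [← hT.ancestors_eq_insert hp, mem_ancestors]
        exact hwu
      rcases mem_insert.1 hwp with rfl | hwp
      · omega
      · exact ⟨p, ⟨by have := hp.2; omega, mem_ancestors.1 hwp⟩, hp.1, hu⟩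
    · rintro ⟨p, ⟨hp, hwp⟩, hpu, hu⟩
      exact ⟨hu, hT.connected.isAncestor_trans hwp (IsParent.isAncestor ⟨hpu, by omega⟩)⟩
  refine hunion ▸ card_biUnion fun p₁ hp₁ p₂ hp₂ hne => ?_
  rw [Function.onFun, Finset.disjoint_left]
  intro u hu₁ hu₂
  simp only [mem_coe, mem_descendantsAt, mem_filter, mem_neighborFinset] at hp₁ hp₂ hu₁ hu₂
  exact hne (hT.isParent_unique (r := r) ⟨hu₁.1, by omega⟩ ⟨hu₂.1, by omega⟩)

theorem IsTree.sum_sum_dist_add_two_mul_sum_sq [DecidableEq V] (hT : G.IsTree) (r : V) (k : ℕ) :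
    ∑ u ∈ G.descendantsAt r r k, ∑ v ∈ G.descendantsAt r r k, G.dist u v
      + 2 * ∑ w, #(G.descendantsAt r w k) ^ 2 = (2 * k + 2) * #(G.descendantsAt r r k) ^ 2 := by
  set L := G.descendantsAt r r k
  have hL : ∀ w, {u ∈ L | w ∈ G.ancestors r u} = G.descendantsAt r w k := fun w => by
    ext u
    simp [L, isAncestor_root]
  have hdist : ∀ u ∈ L, ∀ v ∈ L,
      G.dist u v + 2 * #(G.ancestors r u ∩ G.ancestors r v) = 2 * k + 2 := fun u hu v hv => by
      rw [hT.dist_add_two_mul_card_inter_ancestors, (mem_descendantsAt.1 hu).1,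
        (mem_descendantsAt.1 hv).1]
      ring
  simp_rw [← hL, ← sum_sum_card_inter_eq_sum_sq, mul_sum, ← sum_add_distrib]
  rw [sum_congr rfl fun u hu => sum_congr rfl fun v hv => hdist u hu v hv]
  simp only [sum_const, smul_eq_mul]
  ring

end Ancestors

end SimpleGraph

open SimpleGraph

namespace IsGeneralizedBetheTree

variable {V : Type*} [Fintype V] {G : SimpleGraph V} [DecidableRel G.Adj] {r w : V} {k : ℕ}
  {ds : ℕ → ℕ}

theorem card_descendantsAt (hB : IsGeneralizedBetheTree G r k ds) {j : ℕ}
    (hw : G.dist r w ≤ j) (hj : j ≤ k) :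
    #(G.descendantsAt r w j) = ∏ t ∈ Icc (G.dist r w + 1) j, ds t := by
  induction j, hw using Nat.le_induction with
  | base => simp [hB.1.connected.descendantsAt_dist]
  | succ j hwj ih =>
    rw [hB.1.card_descendantsAt_succ hwj, prod_Icc_succ_top (by omega), ← ih (by omega),
      sum_const_nat fun p hp => hB.2.1 (j + 1) (by simp; omega) p
        (by simp only [mem_descendantsAt] at hp; omega)]

theorem card_level (hB : IsGeneralizedBetheTree G r k ds) {i : ℕ} (hi : i ≤ k) :
    #{v | G.dist r v = i} = ∏ t ∈ Icc 1 i, ds t := by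
  have : ({v | G.dist r v = i} : Finset V) = G.descendantsAt r r i := by
    ext v
    simp [isAncestor_root]
  simpa [this] using hB.card_descendantsAt (w := r) (by simp) hi

theorem pendentFinset_eq (hB : IsGeneralizedBetheTree G r k ds)
    (hds : ∀ t ∈ Icc 1 k, 2 ≤ ds t) : pendentFinset G = G.descendantsAt r r k := by
  ext v
  simp only [pendentFinset, mem_filter, mem_univ, true_and, mem_descendantsAt, isAncestor_root,
    and_true]
  refine ⟨fun hv => (hB.2.2.1 v).eq_of_not_lt fun hlt => ?_, hB.2.2.2 v⟩
  have hchildren := hB.2.1 (G.dist r v + 1) (by simp; omega) v rfl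
  have hle := card_filter_le (G.neighborFinset v) (fun u => G.dist r u = G.dist r v + 1)
  have := hds (G.dist r v + 1) (by simp; omega)
  rw [card_neighborFinset_eq_degree] at hle
  omega

theorem sum_card_descendantsAt_sq (hB : IsGeneralizedBetheTree G r k ds) :
    ∑ w, #(G.descendantsAt r w k) ^ 2 =
      ∑ i ∈ range (k + 1), (∏ t ∈ Icc 1 i, ds t) * (∏ t ∈ Icc (i + 1) k, ds t) ^ 2 := by
  rw [← sum_fiberwise_of_maps_to (g := G.dist r) (t := range (k + 1))
    fun w _ => mem_range.2 (Nat.lt_succ_of_le (hB.2.2.1 w))]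
  refine sum_congr rfl fun i hi => ?_
  rw [sum_congr rfl fun w hw => by
    rw [hB.card_descendantsAt (hB.2.2.1 w) le_rfl, (mem_filter.1 hw).2],
    sum_const, smul_eq_mul, hB.card_level (by simpa [Nat.lt_succ_iff] using hi)]

theorem terminalWienerIndex_add_sum (hB : IsGeneralizedBetheTree G r k ds)
    (hds : ∀ t ∈ Icc 1 k, 2 ≤ ds t) :
    terminalWienerIndex G
      + ∑ i ∈ range (k + 1), (∏ t ∈ Icc 1 i, ds t) * (∏ t ∈ Icc (i + 1) k, ds t) ^ 2
      = (k + 1) * (∏ t ∈ Icc 1 k, ds t) ^ 2 := by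
  classical
  have h := hB.1.sum_sum_dist_add_two_mul_sum_sq r k
  rw [hB.sum_card_descendantsAt_sq, hB.card_descendantsAt (w := r) (by simp) le_rfl,
    dist_self, zero_add, show ∀ n, (2 * k + 2) * n = 2 * ((k + 1) * n) by intro n; ring] at h
  rw [terminalWienerIndex, hB.pendentFinset_eq hds]
  omega

end IsGeneralizedBetheTree

theorem Finset.sum_range_pow_mul_pow_sq {K : Type*} [Field K] {x : K} (hx : x ≠ 1) (n : ℕ) :
    ∑ i ∈ range n, x ^ i * (x ^ (n - (i + 1))) ^ 2 = x ^ (n - 1) * ((x ^ n - 1) / (x - 1)) := by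
  have hterm : ∀ i ∈ range n, x ^ i * (x ^ (n - (i + 1))) ^ 2 = x ^ (n - 1) * x ^ (n - 1 - i) :=
    fun i hi => by
      rw [← pow_mul, ← pow_add, ← pow_add]
      congr 1
      have := mem_range.1 hi
      omega
  rw [sum_congr rfl hterm, ← mul_sum, sum_range_reflect (x ^ ·) n, geom_sum_eq hx]

section Dendrimer

variable {k d : ℕ} {ds : ℕ → ℕ}

theorem prod_Icc_one_eq_of_dendrimer (hds1 : ds 1 = d)
    (hdsi : ∀ i, 2 ≤ i → i ≤ k → ds i = d - 1) {i : ℕ} (hi : 1 ≤ i) (hik : i ≤ k) :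
    ∏ t ∈ Icc 1 i, ds t = d * (d - 1) ^ (i - 1) := by
  rw [← insert_Icc_add_one_left_eq_Icc hi, prod_insert (by simp), hds1,
    prod_congr rfl fun t (ht : t ∈ Icc (1 + 1) i) =>
      hdsi t (mem_Icc.1 ht).1 ((mem_Icc.1 ht).2.trans hik),
    prod_const, Nat.card_Icc, show i + 1 - (1 + 1) = i - 1 by omega]

theorem prod_Icc_succ_eq_of_dendrimer (hdsi : ∀ i, 2 ≤ i → i ≤ k → ds i = d - 1) {i : ℕ}
    (hi : 1 ≤ i) : ∏ t ∈ Icc (i + 1) k, ds t = (d - 1) ^ (k - i) := by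
  rw [prod_congr rfl fun t ht => hdsi t (by have := (mem_Icc.1 ht).1; omega) (mem_Icc.1 ht).2,
    prod_const, Nat.card_Icc, show k + 1 - (i + 1) = k - i by omega]

theorem sum_range_prod_Icc_mul_sq_of_dendrimer (hds1 : ds 1 = d)
    (hdsi : ∀ i, 2 ≤ i → i ≤ k → ds i = d - 1) (hk : 1 ≤ k) :
    ∑ i ∈ range (k + 1), (∏ t ∈ Icc 1 i, ds t) * (∏ t ∈ Icc (i + 1) k, ds t) ^ 2 =
      d * ∑ i ∈ range k, (d - 1) ^ i * ((d - 1) ^ (k - (i + 1))) ^ 2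
        + (d * (d - 1) ^ (k - 1)) ^ 2 := by
  rw [sum_range_succ', Icc_eq_empty_of_lt zero_lt_one, prod_empty, one_mul, zero_add,
    prod_Icc_one_eq_of_dendrimer hds1 hdsi hk le_rfl, mul_sum]
  congr 1
  refine sum_congr rfl fun i hi => ?_
  rw [prod_Icc_one_eq_of_dendrimer hds1 hdsi (by omega) (by simpa using hi),
    prod_Icc_succ_eq_of_dendrimer hdsi (by omega), Nat.add_sub_cancel, mul_assoc]

end Dendrimer

/-- Terminal Wiener index of the regular dendrimer tree `T_{k,d}` of `k+1` levels (the
generalized Bethe tree of `k+1` levels whose degree sequence is `d₁ = d` and `dᵢ = d - 1` for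
`2 ≤ i ≤ k`):
`TW(T_{k,d}) = d (d-1)^{k-1} · [ k d (d-1)^{k-1} + (1 - (d-1)^k)/(d-2) ]`. -/
theorem terminal_wiener_index_dendrimer {V : Type*} [Fintype V] (G : SimpleGraph V)
    [DecidableRel G.Adj] (r : V) (k d : ℕ) (hk : 1 ≤ k) (hd : 3 ≤ d)
    (ds : ℕ → ℕ) (hds1 : ds 1 = d) (hdsi : ∀ i, 2 ≤ i → i ≤ k → ds i = d - 1)
    (hG : IsGeneralizedBetheTree G r k ds) :
    (terminalWienerIndex G : ℚ) =
      (d : ℚ) * ((d : ℚ) - 1) ^ (k - 1) *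
        ((k : ℚ) * (d : ℚ) * ((d : ℚ) - 1) ^ (k - 1)
          + (1 - ((d : ℚ) - 1) ^ k) / ((d : ℚ) - 2)) := by
  have hds : ∀ t ∈ Icc 1 k, 2 ≤ ds t := fun t ht => by
    obtain ⟨h₁, h₂⟩ := mem_Icc.1 ht
    rcases h₁.eq_or_lt with rfl | h₁
    · omega
    · rw [hdsi t h₁ h₂]
      omega
  have hTW := hG.terminalWienerIndex_add_sum hds
  rw [sum_range_prod_Icc_mul_sq_of_dendrimer hds1 hdsi hk,
    prod_Icc_one_eq_of_dendrimer hds1 hdsi hk le_rfl] at hTW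
  have hq := congrArg (Nat.cast (R := ℚ)) hTW
  push_cast [Nat.cast_sub (by omega : 1 ≤ d)] at hq
  have hd2 : (d : ℚ) - 2 ≠ 0 := by
    have : (3 : ℚ) ≤ d := by exact_mod_cast hd
    linarith
  rw [sum_range_pow_mul_pow_sq (by contrapose! hd2; linarith),
    show (d : ℚ) - 1 - 1 = d - 2 by ring] at hq
  rw [eq_sub_of_add_eq hq]
  field_simp
  ring
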